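/- arXiv:2605.06254 — 6 statements merged into one kernel-verified Lean document; each statement's English description precedes it below -/
import Mathlib

section
/- Let b be a nondegenerate symmetric bilinear form on ℝ^n, E a subset of ℝ^n and ι : E → ℝ^n a map such that the spans of E and of ι(E) are nondegenerate subspaces (i.e., b restricted to each span is nondegenerate). Then ι extends to a linear isometry of (ℝ^n, b) if and only if b(x,y) = b(ι(x), ι(y)) for all x, y ∈ E. -/
/-!
Over `ℝ` a quadratic form is determined up to isometry by `sigPos`, `sigNeg` and the dimension of
its radical (Sylvester), and all three are additive under orthogonal sums; hence
`Q₁ ⊕ Q₂ ≅ Q₁' ⊕ Q₂'` and `Q₁ ≅ Q₁'` force `Q₂ ≅ Q₂'` (Witt cancellation).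

Since `b` is preserved on `E`, a linear relation among points of `E` sends the corresponding
combination of their images to a vector orthogonal to `span (ι '' E)`, hence to `0`; so `ι`
extends linearly to an isometry `span E ≃ span (ι '' E)`. Both spans are nondegenerate, so each
is complemented by its orthogonal, Witt cancellation yields an isometry between the two
orthogonal complements, and the two isometries glue to one of `ℝ^n`.
-/

open Module LinearMap QuadraticMap
open LinearMap (BilinForm)

lemma Set.ncard_setOf_sumElim {α β γ : Type*} [Finite α] [Finite β] (f : α → γ) (g : β → γ)
    (p : γ → Prop) :
    {x | p (Sum.elim f g x)}.ncard = {a | p (f a)}.ncard + {b | p (g b)}.ncard := by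
  simp only [← Nat.card_coe_set_eq]
  exact (Nat.card_congr Equiv.subtypeSum).trans Nat.card_sum

namespace QuadraticMap

section WeightedSumSquares

variable {R ι κ : Type*} [CommSemiring R] [Fintype ι] [Fintype κ]

def isometryEquivWeightedSumSquaresSumElim (w₁ : ι → R) (w₂ : κ → R) :
    ((weightedSumSquares R w₁).prod (weightedSumSquares R w₂)).IsometryEquiv
      (weightedSumSquares R (Sum.elim w₁ w₂)) where
  toLinearEquiv := (LinearEquiv.sumArrowLequivProdArrow ι κ R R).symm
  map_app' := by
    rintro ⟨v₁, v₂⟩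
    simp [weightedSumSquares_apply, Fintype.sum_sum_type]

def isometryEquivWeightedSumSquaresComp (w : κ → R) (σ : ι ≃ κ) :
    (weightedSumSquares R (w ∘ σ)).IsometryEquiv (weightedSumSquares R w) where
  toLinearEquiv := LinearEquiv.funCongrLeft R R σ.symm
  map_app' v := by
    simp only [weightedSumSquares_apply]
    rw [← σ.sum_comp]
    simp

end WeightedSumSquares

noncomputable def isometryEquivProdOfIsCompl {R M P : Type*} [CommRing R] [AddCommGroup M]
    [Module R M] [AddCommGroup P] [Module R P] (Q : QuadraticMap R M P) {U U' : Submodule R M}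
    (h : IsCompl U U') (hUU' : ∀ u ∈ U, ∀ u' ∈ U', Q.IsOrtho u u') :
    ((Q.restrict U).prod (Q.restrict U')).IsometryEquiv Q where
  toLinearEquiv := Submodule.prodEquivOfIsCompl U U' h
  map_app' x := hUU' _ x.1.2 _ x.2.2

end QuadraticMap

namespace QuadraticForm

section OrderedField

variable {𝕜 M₁ M₂ : Type*} [Field 𝕜] [LinearOrder 𝕜] [IsStrictOrderedRing 𝕜]
  [AddCommGroup M₁] [Module 𝕜 M₁] [FiniteDimensional 𝕜 M₁]
  [AddCommGroup M₂] [Module 𝕜 M₂] [FiniteDimensional 𝕜 M₂]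
  (Q₁ : QuadraticForm 𝕜 M₁) (Q₂ : QuadraticForm 𝕜 M₂)

theorem exists_equivalent_prod_weightedSumSquares :
    ∃ (w₁ : Fin (finrank 𝕜 M₁) → 𝕜) (w₂ : Fin (finrank 𝕜 M₂) → 𝕜),
      Equivalent Q₁ (weightedSumSquares 𝕜 w₁) ∧ Equivalent Q₂ (weightedSumSquares 𝕜 w₂) ∧
      Equivalent (Q₁.prod Q₂) (weightedSumSquares 𝕜 (Sum.elim w₁ w₂)) := by
  have : Invertible (2 : 𝕜) := invertibleOfNonzero two_ne_zero
  obtain ⟨w₁, ⟨e₁⟩⟩ := Q₁.equivalent_weightedSumSquares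
  obtain ⟨w₂, ⟨e₂⟩⟩ := Q₂.equivalent_weightedSumSquares
  exact ⟨w₁, w₂, ⟨e₁⟩, ⟨e₂⟩, ⟨(e₁.prod e₂).trans (isometryEquivWeightedSumSquaresSumElim w₁ w₂)⟩⟩

theorem sigPos_prod : sigPos (Q₁.prod Q₂) = sigPos Q₁ + sigPos Q₂ := by
  obtain ⟨w₁, w₂, h₁, h₂, h⟩ := exists_equivalent_prod_weightedSumSquares Q₁ Q₂
  rw [sigPos_of_equiv_weightedSumSquares h, sigPos_of_equiv_weightedSumSquares h₁,
    sigPos_of_equiv_weightedSumSquares h₂]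
  exact Set.ncard_setOf_sumElim w₁ w₂ (0 < ·)

theorem sigNeg_prod : sigNeg (Q₁.prod Q₂) = sigNeg Q₁ + sigNeg Q₂ := by
  obtain ⟨w₁, w₂, h₁, h₂, h⟩ := exists_equivalent_prod_weightedSumSquares Q₁ Q₂
  rw [sigNeg_of_equiv_weightedSumSquares h, sigNeg_of_equiv_weightedSumSquares h₁,
    sigNeg_of_equiv_weightedSumSquares h₂]
  exact Set.ncard_setOf_sumElim w₁ w₂ (· < 0)

theorem finrank_radical_prod :
    finrank 𝕜 (Q₁.prod Q₂).radical = finrank 𝕜 Q₁.radical + finrank 𝕜 Q₂.radical := by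
  obtain ⟨w₁, w₂, h₁, h₂, h⟩ := exists_equivalent_prod_weightedSumSquares Q₁ Q₂
  rw [finrank_radical_of_equiv_weightedSumSquares h,
    finrank_radical_of_equiv_weightedSumSquares h₁,
    finrank_radical_of_equiv_weightedSumSquares h₂]
  exact Set.ncard_setOf_sumElim w₁ w₂ (· = 0)

end OrderedField

variable {M₁ M₂ M₁' M₂' : Type*}
  [AddCommGroup M₁] [Module ℝ M₁] [FiniteDimensional ℝ M₁]
  [AddCommGroup M₂] [Module ℝ M₂] [FiniteDimensional ℝ M₂]
  [AddCommGroup M₁'] [Module ℝ M₁'] [FiniteDimensional ℝ M₁']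
  [AddCommGroup M₂'] [Module ℝ M₂'] [FiniteDimensional ℝ M₂']

theorem equivalent_of_sigPos_eq_of_sigNeg_eq_of_finrank_radical_eq
    {Q₁ : QuadraticForm ℝ M₁} {Q₂ : QuadraticForm ℝ M₂}
    (hpos : sigPos Q₁ = sigPos Q₂) (hneg : sigNeg Q₁ = sigNeg Q₂)
    (hrad : finrank ℝ Q₁.radical = finrank ℝ Q₂.radical) : Equivalent Q₁ Q₂ := by
  obtain ⟨w₁, h₁⟩ := Q₁.equivalent_weightedSumSquares
  obtain ⟨w₂, h₂⟩ := Q₂.equivalent_weightedSumSquares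
  have hfiber (s : SignType) :
      Nat.card {i // SignType.sign (w₁ i) = s} = Nat.card {j // SignType.sign (w₂ j) = s} := by
    change Nat.card {i | SignType.sign (w₁ i) = s} = Nat.card {j | SignType.sign (w₂ j) = s}
    simp only [Nat.card_coe_set_eq]
    cases s
    · simpa only [SignType.zero_eq_zero, sign_eq_zero_iff,
        ← finrank_radical_of_equiv_weightedSumSquares h₁,
        ← finrank_radical_of_equiv_weightedSumSquares h₂]
    · simpa only [SignType.neg_eq_neg_one, sign_eq_neg_one_iff,
        ← sigNeg_of_equiv_weightedSumSquares h₁, ← sigNeg_of_equiv_weightedSumSquares h₂]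
    · simpa only [SignType.pos_eq_one, sign_eq_one_iff,
        ← sigPos_of_equiv_weightedSumSquares h₁, ← sigPos_of_equiv_weightedSumSquares h₂]
  -- a reindexing of the coordinates that matches the signs of `w₁` with those of `w₂`
  let e (s : SignType) := (Finite.card_eq.mp (hfiber s)).some
  let σ := Equiv.ofFiberEquiv e
  have hσ : (fun j => (SignType.sign (w₂ j) : ℝ)) ∘ σ = fun i => (SignType.sign (w₁ i) : ℝ) := by
    funext i
    exact congrArg (fun s : SignType => (s : ℝ)) (Equiv.ofFiberEquiv_map e i)
  refine h₁.trans (.trans ⟨isometryEquivSignWeightedSumSquares w₁⟩ (.trans ?_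
    (h₂.trans ⟨isometryEquivSignWeightedSumSquares w₂⟩).symm))
  rw [← hσ]
  exact ⟨isometryEquivWeightedSumSquaresComp _ σ⟩

theorem Equivalent.cancel_left {Q₁ : QuadraticForm ℝ M₁} {Q₂ : QuadraticForm ℝ M₂}
    {Q₁' : QuadraticForm ℝ M₁'} {Q₂' : QuadraticForm ℝ M₂'}
    (h : Equivalent (Q₁.prod Q₂) (Q₁'.prod Q₂')) (h₁ : Equivalent Q₁ Q₁') :
    Equivalent Q₂ Q₂' := by
  have hpos := h.sigPos_eq
  have hneg := h.sigNeg_eq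
  have hrad := h.rank_radical_eq
  rw [sigPos_prod, sigPos_prod, h₁.sigPos_eq] at hpos
  rw [sigNeg_prod, sigNeg_prod, h₁.sigNeg_eq] at hneg
  rw [finrank_radical_prod, finrank_radical_prod, h₁.rank_radical_eq] at hrad
  exact equivalent_of_sigPos_eq_of_sigNeg_eq_of_finrank_radical_eq (by omega) (by omega) (by omega)

theorem exists_isometryEquiv_extend {V : Type*} [AddCommGroup V] [Module ℝ V]
    [FiniteDimensional ℝ V] (Q : QuadraticForm ℝ V) {U U' W W' : Submodule ℝ V}
    (hU : IsCompl U U') (hW : IsCompl W W') (hUU' : ∀ u ∈ U, ∀ u' ∈ U', Q.IsOrtho u u')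
    (hWW' : ∀ w ∈ W, ∀ w' ∈ W', Q.IsOrtho w w')
    (φ : (Q.restrict U).IsometryEquiv (Q.restrict W)) :
    ∃ g : Q.IsometryEquiv Q, ∀ u : U, g u = φ u := by
  let eU := Q.isometryEquivProdOfIsCompl hU hUU'
  let eW := Q.isometryEquivProdOfIsCompl hW hWW'
  obtain ⟨ψ⟩ : Equivalent (Q.restrict U') (Q.restrict W') :=
    Equivalent.cancel_left ⟨eU.trans eW.symm⟩ ⟨φ⟩
  refine ⟨eU.symm.trans ((φ.prod ψ).trans eW), fun u => ?_⟩
  have hu : eU.symm u = (u, 0) := Submodule.prodEquivOfIsCompl_symm_apply_left U U' hU u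
  show eW ((φ.prod ψ) (eU.symm u)) = φ u
  rw [hu]
  show Submodule.prodEquivOfIsCompl W W' hW (φ u, ψ 0) = φ u
  simp

end QuadraticForm

namespace LinearMap.BilinForm

section CommRing

variable {R M V : Type*} [CommRing R] [AddCommGroup M] [Module R M] [AddCommGroup V] [Module R V]

lemma ker_le_ker_of_compl₁₂_eq {b : BilinForm R V} {f f' : M →ₗ[R] V}
    (h : b.compl₁₂ f f = b.compl₁₂ f' f')
    (hf' : ∀ x ∈ range f', (∀ y ∈ range f', b x y = 0) → x = 0) : ker f ≤ ker f' := by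
  intro m hm
  rw [mem_ker] at hm ⊢
  refine hf' _ (mem_range_self f' m) ?_
  rintro _ ⟨m', rfl⟩
  simpa [hm] using (LinearMap.congr_fun₂ h m m').symm

lemma apply_isometryEquiv_apply [Invertible (2 : R)] {b : BilinForm R V} (hb : b.IsSymm)
    (g : b.toQuadraticMap.IsometryEquiv b.toQuadraticMap) (x y : V) :
    b (g x) (g y) = b x y := by
  have hcomp : b.toQuadraticMap.comp g.toLinearEquiv.toLinearMap = b.toQuadraticMap :=
    QuadraticMap.ext g.map_app
  have h := QuadraticMap.associated_comp R b.toQuadraticMap g.toLinearEquiv.toLinearMap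
  rw [hcomp, QuadraticMap.associated_left_inverse R hb.eq] at h
  exact (LinearMap.congr_fun₂ h x y).symm

end CommRing

lemma isCompl_orthogonal_of_separating {K V : Type*} [Field K] [AddCommGroup V] [Module K V]
    [FiniteDimensional K V] {b : BilinForm K V} (hb : b.IsSymm) {U : Submodule K V}
    (hU : ∀ x ∈ U, (∀ y ∈ U, b x y = 0) → x = 0) : IsCompl U (b.orthogonal U) := by
  refine (isCompl_orthogonal_iff_disjoint hb.isRefl).mpr (Submodule.disjoint_def.mpr ?_)
  intro x hxU hx
  exact hU x hxU fun y hy => by rw [← hb.eq]; exact mem_orthogonal_iff.mp hx y hy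

variable {V : Type*} [AddCommGroup V] [Module ℝ V] [FiniteDimensional ℝ V]
  {b : BilinForm ℝ V}

theorem exists_isometry_extend (hb : b.IsSymm) {U W : Submodule ℝ V}
    (hU : ∀ x ∈ U, (∀ y ∈ U, b x y = 0) → x = 0) (hW : ∀ x ∈ W, (∀ y ∈ W, b x y = 0) → x = 0)
    (φ : U ≃ₗ[ℝ] W) (hφ : ∀ u u', b (φ u) (φ u') = b u u') :
    ∃ g : V ≃ₗ[ℝ] V, (∀ x y, b (g x) (g y) = b x y) ∧ ∀ u : U, g u = φ u := by
  have hortho (S : Submodule ℝ V) : ∀ x ∈ S, ∀ y ∈ b.orthogonal S, b.toQuadraticMap.IsOrtho x y :=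
    fun x hx y hy => (toQuadraticMap_isOrtho (isSymm_iff.mp hb)).mpr (mem_orthogonal_iff.mp hy x hx)
  obtain ⟨g, hg⟩ := QuadraticForm.exists_isometryEquiv_extend b.toQuadraticMap
    (isCompl_orthogonal_of_separating hb hU) (isCompl_orthogonal_of_separating hb hW)
    (hortho U) (hortho W) { φ with map_app' := fun u => hφ u u }
  exact ⟨g.toLinearEquiv, apply_isometryEquiv_apply hb g, hg⟩

theorem exists_isometry_apply_eq (hb : b.IsSymm) {ι : Type*} (v v' : ι → V)
    (hvv' : ∀ i j, b (v i) (v j) = b (v' i) (v' j))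
    (hv : ∀ x ∈ Submodule.span ℝ (Set.range v),
      (∀ y ∈ Submodule.span ℝ (Set.range v), b x y = 0) → x = 0)
    (hv' : ∀ x ∈ Submodule.span ℝ (Set.range v'),
      (∀ y ∈ Submodule.span ℝ (Set.range v'), b x y = 0) → x = 0) :
    ∃ g : V ≃ₗ[ℝ] V, (∀ x y, b (g x) (g y) = b x y) ∧ ∀ i, g (v i) = v' i := by
  let f := Finsupp.linearCombination ℝ v
  let f' := Finsupp.linearCombination ℝ v'
  have hff' : b.compl₁₂ f f = b.compl₁₂ f' f' :=
    ext_basis Finsupp.basisSingleOne fun i j => by simpa [f, f'] using hvv' i j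
  rw [← Finsupp.range_linearCombination] at hv hv'
  have hker : ker f = ker f' :=
    (ker_le_ker_of_compl₁₂_eq hff' hv').antisymm (ker_le_ker_of_compl₁₂_eq hff'.symm hv)
  let φ : range f ≃ₗ[ℝ] range f' := f.quotKerEquivRange.symm.trans
    ((Submodule.quotEquivOfEq _ _ hker).trans f'.quotKerEquivRange)
  have hφ (m) : (φ ⟨f m, mem_range_self f m⟩ : V) = f' m := by
    simp only [φ, LinearEquiv.trans_apply, quotKerEquivRange_symm_apply_image, Submodule.mkQ_apply,
      Submodule.quotEquivOfEq_mk, quotKerEquivRange_apply_mk]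
  obtain ⟨g, hg, hgφ⟩ := exists_isometry_extend hb hv hv' φ <| by
    rintro ⟨_, m, rfl⟩ ⟨_, m', rfl⟩
    rw [hφ, hφ]
    exact (LinearMap.congr_fun₂ hff' m m').symm
  refine ⟨g, hg, fun i => ?_⟩
  have hgi := hgφ ⟨f (Finsupp.single i 1), mem_range_self f _⟩
  rw [hφ] at hgi
  simpa [f, f'] using hgi

end LinearMap.BilinForm

theorem gram_extension_iff_general (n : ℕ) (b : (Fin n → ℝ) →ₗ[ℝ] (Fin n → ℝ) →ₗ[ℝ] ℝ)
    (hsymm : ∀ x y, b x y = b y x)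
    (E : Set (Fin n → ℝ)) (ι : (Fin n → ℝ) → (Fin n → ℝ))
    (hE : ∀ x ∈ Submodule.span ℝ E, (∀ y ∈ Submodule.span ℝ E, b x y = 0) → x = 0)
    (hιE : ∀ x ∈ Submodule.span ℝ (ι '' E),
      (∀ y ∈ Submodule.span ℝ (ι '' E), b x y = 0) → x = 0) :
    (∃ g : (Fin n → ℝ) ≃ₗ[ℝ] (Fin n → ℝ),
        (∀ x y, b (g x) (g y) = b x y) ∧ ∀ x ∈ E, g x = ι x) ↔
      (∀ x ∈ E, ∀ y ∈ E, b x y = b (ι x) (ι y)) := by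
  refine ⟨fun ⟨g, hg, hgE⟩ x hx y hy => by rw [← hgE x hx, ← hgE y hy, hg], fun hgram => ?_⟩
  obtain ⟨g, hg, hgE⟩ := BilinForm.exists_isometry_apply_eq ⟨hsymm⟩ ((↑) : E → Fin n → ℝ)
    (ι ∘ (↑)) (fun x y => hgram x x.2 y y.2) (by rwa [Subtype.range_coe])
    (by rwa [Set.range_comp, Subtype.range_coe])
  exact ⟨g, hg, fun x hx => hgE ⟨x, hx⟩⟩

/-- A map defined on a subset `E` of `ℝ^n`, whose domain span and image span are
nondegenerate for a nondegenerate symmetric bilinear form `b`, extends to a linear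
isometry of `(ℝ^n, b)` iff it preserves `b` on `E`. -/
theorem gram_extension_iff (n : ℕ) (b : (Fin n → ℝ) →ₗ[ℝ] (Fin n → ℝ) →ₗ[ℝ] ℝ)
    (hsymm : ∀ x y, b x y = b y x)
    (hnd : ∀ x, (∀ y, b x y = 0) → x = 0)
    (E : Set (Fin n → ℝ)) (ι : (Fin n → ℝ) → (Fin n → ℝ))
    (hE : ∀ x ∈ Submodule.span ℝ E, (∀ y ∈ Submodule.span ℝ E, b x y = 0) → x = 0)
    (hιE : ∀ x ∈ Submodule.span ℝ (ι '' E),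
      (∀ y ∈ Submodule.span ℝ (ι '' E), b x y = 0) → x = 0) :
    (∃ g : (Fin n → ℝ) ≃ₗ[ℝ] (Fin n → ℝ),
        (∀ x y, b (g x) (g y) = b x y) ∧ ∀ x ∈ E, g x = ι x) ↔
      (∀ x ∈ E, ∀ y ∈ E, b x y = b (ι x) (ι y)) :=
  gram_extension_iff_general n b hsymm E ι hE hιE
end

section
/- Let G = (S, A) be a finite simple graph (edges are 2-element subsets of S, no loops). Consider the linear map d : ℝ^S → ℝ^A defined by (d f)({ξ,η}) = f(ξ) + f(η). Then the dimension of the kernel of d equals the number of connected components of G that are bipartite. -/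
open SimpleGraph

/-- The space of `0`-cocycles for the twisted differential `d f({ξ,η}) = f ξ + f η`
of a simple graph: functions `f : V → ℝ` with `f ξ + f η = 0` on every edge.
This is exactly the kernel of `d : ℝ^S → ℝ^A`. -/
def twistedCocycles {V : Type*} (G : SimpleGraph V) : Submodule ℝ (V → ℝ) where
  carrier := {f | ∀ ⦃ξ η : V⦄, G.Adj ξ η → f ξ + f η = 0}
  add_mem' := by
    intro f g hf hg ξ η h
    have := hf h; have := hg h
    simp only [Pi.add_apply]; linarith
  zero_mem' := by intro ξ η _; simp
  smul_mem' := by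
    intro c f hf ξ η h
    simp only [Pi.smul_apply, smul_eq_mul]
    linear_combination c * hf h

namespace TwistedAux

variable {V : Type*} {G : SimpleGraph V}

lemma walk_parity {f : V → ℝ} (hf : ∀ ⦃ξ η : V⦄, G.Adj ξ η → f ξ + f η = 0)
    {u v : V} (p : G.Walk u v) : f v = (-1 : ℝ) ^ p.length * f u := by
  induction p with
  | nil => simp
  | @cons a b c h q ih =>
    have hb : f b = - f a := by linarith [hf h]
    rw [ih, hb, SimpleGraph.Walk.length_cons, pow_succ]
    ring

/-- sign of a color -/
def sgn : Fin 2 → ℝ := fun i => if i = 0 then 1 else -1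

lemma sgn_mul_self (i : Fin 2) : sgn i * sgn i = 1 := by
  fin_cases i <;> simp [sgn]

lemma sgn_add_of_ne {i j : Fin 2} (h : i ≠ j) : sgn i + sgn j = 0 := by
  fin_cases i <;> fin_cases j <;> simp_all [sgn]

lemma mem_own_supp (w : V) : w ∈ (G.connectedComponentMk w).supp := by
  rw [SimpleGraph.ConnectedComponent.mem_supp_iff]

lemma out_mem_supp (c : G.ConnectedComponent) : c.out ∈ c.supp := by
  rw [SimpleGraph.ConnectedComponent.mem_supp_iff]
  exact c.out_eq

/-- If a twisted cocycle is nonzero somewhere, its component is bipartite. -/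
lemma colorable_of_ne_zero {f : V → ℝ} (hf : ∀ ⦃ξ η : V⦄, G.Adj ξ η → f ξ + f η = 0)
    {w : V} (hw : f w ≠ 0) :
    (G.induce (G.connectedComponentMk w).supp).Colorable 2 := by
  set c := G.connectedComponentMk w with hc
  have hval : ∀ u : c.supp, f u.1 * f w ≠ 0 := by
    intro u
    have hu : G.connectedComponentMk u.1 = c := by
      rw [← SimpleGraph.ConnectedComponent.mem_supp_iff]; exact u.2
    have hr : G.Reachable w u.1 := by
      rw [← SimpleGraph.ConnectedComponent.eq, ← hc, hu]
    obtain ⟨p⟩ := hr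
    have := walk_parity hf p
    rw [this, mul_assoc]
    exact mul_ne_zero (by positivity) (mul_ne_zero hw hw)
  refine ⟨SimpleGraph.Coloring.mk (fun u => if 0 < f u.1 * f w then 0 else 1) ?_⟩
  intro u v hadj heq
  have hGA : G.Adj u.1 v.1 := hadj
  have hsum := hf hGA
  have hu := hval u
  have hv := hval v
  have hprod : (f u.1 * f w) * (f v.1 * f w) < 0 := by
    have hu0 : f u.1 ≠ 0 := fun h => hu (by rw [h]; ring)
    have : (f u.1 * f w) * (f v.1 * f w) = -(f u.1 ^ 2 * f w ^ 2) := by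
      have : f v.1 = - f u.1 := by linarith
      rw [this]; ring
    rw [this]
    have : 0 < f u.1 ^ 2 * f w ^ 2 := by positivity
    linarith
  by_cases h1 : 0 < f u.1 * f w
  · simp only [if_pos h1] at heq
    by_cases h2 : 0 < f v.1 * f w
    · nlinarith
    · simp [if_neg h2] at heq
  · simp only [if_neg h1] at heq
    by_cases h2 : 0 < f v.1 * f w
    · simp [if_pos h2] at heq
    · have hu' : f u.1 * f w < 0 := lt_of_le_of_ne (not_lt.mp h1) hu
      have hv' : f v.1 * f w < 0 := lt_of_le_of_ne (not_lt.mp h2) hv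
      nlinarith

end TwistedAux

open TwistedAux in
/-- The dimension of the kernel of the twisted differential
`d : ℝ^S → ℝ^A`, `d f({ξ,η}) = f ξ + f η`, of a finite simple graph equals the
number of bipartite connected components of the graph. -/
theorem twisted_H0_dim_eq_card_bipartite_components
    {V : Type*} [Fintype V] (G : SimpleGraph V) :
    Module.finrank ℝ (twistedCocycles G) =
      Nat.card {c : G.ConnectedComponent // (G.induce c.supp).Colorable 2} := by
  classical
  set ι := {c : G.ConnectedComponent // (G.induce c.supp).Colorable 2}
  -- the evaluation map at chosen representatives
  let Φ : twistedCocycles G →ₗ[ℝ] (ι → ℝ) :=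
    { toFun := fun f c => f.1 c.1.out
      map_add' := by intro f g; rfl
      map_smul' := by intro r f; rfl }
  have hinj : Function.Injective Φ := by
    intro f g hfg
    have key : ∀ f : twistedCocycles G, Φ f = 0 → f = 0 := by
      intro f hΦ
      ext w
      by_contra hw
      have hf := f.2
      have hcol := colorable_of_ne_zero hf hw
      set c := G.connectedComponentMk w with hc
      have h0 : f.1 c.out = 0 := congrFun hΦ ⟨c, hcol⟩
      have hr : G.Reachable c.out w := by
        rw [← SimpleGraph.ConnectedComponent.eq]
        exact c.out_eq.trans hc
      obtain ⟨p⟩ := hr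
      have := walk_parity hf p
      rw [h0, mul_zero] at this
      exact hw this
    have : Φ (f - g) = 0 := by rw [map_sub, hfg, sub_self]
    have := key _ this
    exact sub_eq_zero.mp (by exact_mod_cast this)
  have hsurj : Function.Surjective Φ := by
    intro g
    -- choose a coloring for each bipartite component
    let col : ∀ c : G.ConnectedComponent, (G.induce c.supp).Colorable 2 →
        (G.induce c.supp).Coloring (Fin 2) := fun c h => h.some
    let F : G.ConnectedComponent → V → ℝ := fun c w =>
      if h : w ∈ c.supp ∧ (G.induce c.supp).Colorable 2 then
        sgn (col c h.2 ⟨w, h.1⟩) * sgn (col c h.2 ⟨c.out, out_mem_supp c⟩) * g ⟨c, h.2⟩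
      else 0
    let f : V → ℝ := fun w => F (G.connectedComponentMk w) w
    have hfmem : f ∈ twistedCocycles G := by
      intro ξ η hadj
      have hcc : G.connectedComponentMk η = G.connectedComponentMk ξ :=
        (SimpleGraph.ConnectedComponent.connectedComponentMk_eq_of_adj hadj).symm
      show F (G.connectedComponentMk ξ) ξ + F (G.connectedComponentMk η) η = 0
      rw [hcc]
      set c := G.connectedComponentMk ξ with hc
      have hξ : ξ ∈ c.supp := mem_own_supp ξ
      have hη : η ∈ c.supp := by
        rw [SimpleGraph.ConnectedComponent.mem_supp_iff, hcc]
      by_cases hcol : (G.induce c.supp).Colorable 2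
      · rw [show F c ξ = sgn (col c hcol ⟨ξ, hξ⟩) * sgn (col c hcol ⟨c.out, out_mem_supp c⟩)
              * g ⟨c, hcol⟩ from dif_pos ⟨hξ, hcol⟩,
            show F c η = sgn (col c hcol ⟨η, hη⟩) * sgn (col c hcol ⟨c.out, out_mem_supp c⟩)
              * g ⟨c, hcol⟩ from dif_pos ⟨hη, hcol⟩]
        have hne : col c hcol ⟨ξ, hξ⟩ ≠ col c hcol ⟨η, hη⟩ :=
          (col c hcol).valid (by exact hadj)
        have := sgn_add_of_ne hne
        linear_combination (sgn (col c hcol ⟨c.out, out_mem_supp c⟩) * g ⟨c, hcol⟩) * this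
      · rw [show F c ξ = 0 from dif_neg (fun h => hcol h.2),
            show F c η = 0 from dif_neg (fun h => hcol h.2)]
        ring
    refine ⟨⟨f, hfmem⟩, ?_⟩
    funext cb
    obtain ⟨c, hcol⟩ := cb
    show f c.out = g ⟨c, hcol⟩
    have hmk : G.connectedComponentMk c.out = c := c.out_eq
    show F (G.connectedComponentMk c.out) c.out = g ⟨c, hcol⟩
    rw [hmk]
    rw [show F c c.out = sgn (col c hcol ⟨c.out, out_mem_supp c⟩)
          * sgn (col c hcol ⟨c.out, out_mem_supp c⟩) * g ⟨c, hcol⟩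
        from dif_pos ⟨out_mem_supp c, hcol⟩]
    rw [sgn_mul_self]; ring
  have e : twistedCocycles G ≃ₗ[ℝ] (ι → ℝ) := LinearEquiv.ofBijective Φ ⟨hinj, hsurj⟩
  have : Finite ι := by
    have : Finite G.ConnectedComponent := Quot.finite _
    infer_instance
  have : Fintype ι := Fintype.ofFinite ι
  rw [e.finrank_eq, Module.finrank_pi, Nat.card_eq_fintype_card]
end

section
/- Let M be a real symmetric n×n matrix with det M ≠ 0. Then there exists a permutation σ of {1,…,n} such that M_{k,σ(k)} ≠ 0 for every k. Moreover, if all off-diagonal entries of M are ≤ 0, all diagonal entries of M are ≤ 0, and M has signature (p, q) (p positive and q negative eigenvalues, p+q=n), then σ can be chosen with sign(σ) = (-1)^p. -/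
lemma my_prod_neg {α : Type*} (s : Finset α) (g : α → ℝ) :
    (∏ k ∈ s, (-(g k))) = (-1 : ℝ) ^ s.card * ∏ k ∈ s, g k := by
  calc (∏ k ∈ s, (-(g k))) = ∏ k ∈ s, ((-1 : ℝ) * g k) := by
        refine Finset.prod_congr rfl fun k _ => by ring
    _ = (∏ _k ∈ s, (-1 : ℝ)) * ∏ k ∈ s, g k := Finset.prod_mul_distrib
    _ = (-1 : ℝ) ^ s.card * ∏ k ∈ s, g k := by rw [Finset.prod_const]

/-- Leibniz-expansion permutation lemma: an invertible real symmetric matrix has a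
permutation `σ` with `M k (σ k) ≠ 0` for all `k`; if moreover all entries of `M`
are `≤ 0` and `M` has signature `(p, q)`, then `σ` can be chosen of sign `(-1)^p`. -/
theorem exists_perm_of_det_ne_zero (n p q : ℕ) (M : Matrix (Fin n) (Fin n) ℝ)
    (hM : M.IsHermitian) (hdet : M.det ≠ 0) :
    (∃ σ : Equiv.Perm (Fin n), ∀ k, M k (σ k) ≠ 0) ∧
    ((∀ i j, M i j ≤ 0) →
      Fintype.card {i // 0 < hM.eigenvalues i} = p →
      Fintype.card {i // hM.eigenvalues i < 0} = q →
      p + q = n →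
      ∃ σ : Equiv.Perm (Fin n), (∀ k, M k (σ k) ≠ 0) ∧
        Equiv.Perm.sign σ = (-1) ^ p) := by
  have hdet' := hdet
  rw [Matrix.det_apply] at hdet'
  obtain ⟨σ0, -, hσ0⟩ := Finset.exists_ne_zero_of_sum_ne_zero hdet'
  have hprod0 : (∏ i, M (σ0 i) i) ≠ 0 := fun h => by simp [h] at hσ0
  have hfac0 : ∀ k, M (σ0 k) k ≠ 0 := fun k =>
    Finset.prod_ne_zero_iff.mp hprod0 k (Finset.mem_univ k)
  refine ⟨⟨σ0⁻¹, fun k => by simpa using hfac0 (σ0⁻¹ k)⟩, ?_⟩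
  intro hle hp hq hpq
  by_contra hcon
  push_neg at hcon
  have hsign : ∀ σ : Equiv.Perm (Fin n), (∏ i, M (σ i) i) ≠ 0 →
      Equiv.Perm.sign σ = -((-1) ^ p) := by
    intro σ hprod
    have hfac : ∀ k, M (σ k) k ≠ 0 := fun k =>
      Finset.prod_ne_zero_iff.mp hprod k (Finset.mem_univ k)
    have h1 : Equiv.Perm.sign σ⁻¹ ≠ (-1) ^ p :=
      hcon σ⁻¹ (fun k => by simpa using hfac (σ⁻¹ k))
    rw [Equiv.Perm.sign_inv] at h1
    rcases Int.units_eq_one_or (Equiv.Perm.sign σ) with h | h <;>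
      rcases Nat.even_or_odd p with hp' | hp' <;>
      simp_all [hp'.neg_one_pow, Odd.neg_one_pow]
  set b : ℝ := (-1 : ℝ) ^ q with hbdef
  set a : ℝ := (-1 : ℝ) ^ p with hadef
  have ha : a * a = 1 := by rw [hadef, ← pow_add, ← two_mul, pow_mul]; norm_num
  have hb : b * b = 1 := by rw [hbdef, ← pow_add, ← two_mul, pow_mul]; norm_num
  have hdetprod : M.det = ∏ i, hM.eigenvalues i := by
    simpa using hM.det_eq_prod_eigenvalues
  have hene : ∀ i, hM.eigenvalues i ≠ 0 := by
    intro i hi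
    exact hdet (by rw [hdetprod]; exact Finset.prod_eq_zero (Finset.mem_univ i) hi)
  set N : Finset (Fin n) := Finset.univ.filter (fun i => hM.eigenvalues i < 0) with hN
  have hcardN : N.card = q := by rw [← hq, Fintype.card_subtype]
  set A : ℝ := ∏ i ∈ N, (-(hM.eigenvalues i)) with hAdef
  have hA : 0 < A := by
    refine Finset.prod_pos fun i hi => ?_
    rw [hN, Finset.mem_filter] at hi
    linarith [hi.2]
  have hB : 0 < ∏ i ∈ Finset.univ.filter (fun i => ¬ hM.eigenvalues i < 0),
      hM.eigenvalues i := by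
    refine Finset.prod_pos fun i hi => ?_
    rw [Finset.mem_filter] at hi
    exact lt_of_le_of_ne (not_lt.mp hi.2) (Ne.symm (hene i))
  have h3 : A = b * ∏ i ∈ N, hM.eigenvalues i := by
    rw [hAdef, my_prod_neg, hcardN]
  have h2 : (∏ i ∈ N, hM.eigenvalues i) = b * A := by
    rw [h3, ← mul_assoc, hb, one_mul]
  have hpos : (0 : ℝ) < b * M.det := by
    rw [hdetprod, ← Finset.prod_filter_mul_prod_filter_not Finset.univ
      (fun i => hM.eigenvalues i < 0), ← hN, h2]
    have : b * (b * A * ∏ i ∈ Finset.univ.filter (fun i => ¬ hM.eigenvalues i < 0),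
        hM.eigenvalues i) = (b * b) * (A * ∏ i ∈ Finset.univ.filter
        (fun i => ¬ hM.eigenvalues i < 0), hM.eigenvalues i) := by ring
    rw [this, hb, one_mul]
    exact mul_pos hA hB
  have hnonpos : b * M.det ≤ 0 := by
    rw [Matrix.det_apply, Finset.mul_sum]
    apply Finset.sum_nonpos
    intro σ _
    by_cases hprod : (∏ i, M (σ i) i) = 0
    · simp [hprod]
    · have hs := hsign σ hprod
      have hsR : ((Equiv.Perm.sign σ : ℤ) : ℝ) = -a := by rw [hs]; push_cast; rw [hadef]
      have hP : (0 : ℝ) ≤ ∏ k, (-(M (σ k) k)) :=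
        Finset.prod_nonneg fun k _ => neg_nonneg.mpr (hle (σ k) k)
      have hP2 : (0 : ℝ) ≤ a * b * ∏ i, M (σ i) i := by
        have hab : a * b = (-1 : ℝ) ^ n := by
          rw [hadef, hbdef, ← pow_add, hpq]
        rw [hab]
        have := my_prod_neg Finset.univ (fun k => M (σ k) k)
        simp only [Finset.card_univ, Fintype.card_fin] at this
        rw [← this]
        exact hP
      rw [Units.smul_def, zsmul_eq_mul, hsR]
      have : b * (-a * ∏ i, M (σ i) i) = -(a * b * ∏ i, M (σ i) i) := by ring
      rw [this]
      linarith
  linarith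
end

section
/- Let A be a finite set of 2-element subsets of {1,…,n}, P = {p ∈ ℝ^n : p_i + p_j ≤ 0 for all {i,j} ∈ A}, and σ(p) = Σ p_k. If there exists a nonzero p ∈ P with σ(p) ≥ 0, then there exists a nonzero p* ∈ P with σ(p*) ≥ 0 and all coordinates p*_k ∈ {-1, 0, 1}. -/
/-!
Let `t` be the smallest nonzero `|pₖ|`. Then `p = t • sign p + p'` with `p' = p - t • sign p`,
and both `sign p` and `p'` stay in the cone: the sign map is monotone and odd, and subtracting
`t • sign p` moves every coordinate towards `0` by `t` without crossing it. Hence either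
`σ (sign p) ≥ 0`, or `σ p' > σ p ≥ 0`; since `p'` vanishes wherever `p` does and also at a
coordinate where `|pₖ| = t`, induction on the size of the support concludes.
-/

open Finset SignType

section Scalar

variable {α : Type*} [CommRing α] [LinearOrder α] [IsStrictOrderedRing α] {x y t : α}

theorem sign_add_sign_nonpos (h : x + y ≤ 0) : (sign x : α) + sign y ≤ 0 := by
  rcases lt_trichotomy x 0 with hx | rfl | hx <;>
    rcases lt_trichotomy y 0 with hy | rfl | hy <;>
    simp [sign_pos, sign_neg, *] <;> linarith

theorem sub_mul_sign_add_sub_mul_sign_nonpos (ht : 0 ≤ t) (hx : x ≠ 0 → t ≤ |x|)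
    (hy : y ≠ 0 → t ≤ |y|) (h : x + y ≤ 0) :
    x - t * sign x + (y - t * sign y) ≤ 0 := by
  rcases lt_trichotomy x 0 with hx' | rfl | hx' <;>
    rcases lt_trichotomy y 0 with hy' | rfl | hy' <;>
    simp_all [abs_of_neg, abs_of_pos, ne_of_gt, ne_of_lt] <;> linarith

theorem support_sub_abs_mul_sign_ssubset {ι : Type*} {p : ι → α} {k₀ : ι} (hk₀ : p k₀ ≠ 0) :
    Function.support (fun k ↦ p k - |p k₀| * sign (p k)) ⊂ Function.support p := by
  refine ⟨Function.support_subset_iff'.2 fun k hk ↦ ?_, fun h ↦ ?_⟩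
  · simp [Function.notMem_support.1 hk]
  · exact h hk₀ (by simp [abs_mul_sign])

end Scalar

variable {ι α : Type*} [CommRing α] [LinearOrder α] [IsStrictOrderedRing α]

def edgeCone (A : Set (Sym2 ι)) : Set (ι → α) :=
  {p | ∀ i j, s(i, j) ∈ A → p i + p j ≤ 0}

variable {A : Set (Sym2 ι)}

theorem sign_comp_mem_edgeCone {p : ι → α} (hp : p ∈ edgeCone A) :
    (fun k ↦ (sign (p k) : α)) ∈ edgeCone A :=
  fun i j hij ↦ sign_add_sign_nonpos (hp i j hij)

theorem sub_mul_sign_mem_edgeCone {p : ι → α} {t : α} (ht : 0 ≤ t)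
    (hmin : ∀ k, p k ≠ 0 → t ≤ |p k|) (hp : p ∈ edgeCone A) :
    (fun k ↦ p k - t * sign (p k)) ∈ edgeCone A :=
  fun i j hij ↦ sub_mul_sign_add_sub_mul_sign_nonpos ht (hmin i) (hmin j) (hp i j hij)

theorem exists_mem_edgeCone_sum_sign_nonneg [Fintype ι] {p : ι → α} (hp : p ∈ edgeCone A)
    (hp0 : p ≠ 0) (hsum : 0 ≤ ∑ k, p k) :
    ∃ q : ι → α, q ∈ edgeCone A ∧ q ≠ 0 ∧ 0 ≤ ∑ k, (sign (q k) : α) := by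
  by_cases hsign : 0 ≤ ∑ k, (sign (p k) : α)
  · exact ⟨p, hp, hp0, hsign⟩
  obtain ⟨k₀, hk₀, hmin⟩ := Set.exists_min_image _ (|p ·|) (Set.toFinite _)
    (Function.support_nonempty_iff.2 hp0)
  set p' : ι → α := fun k ↦ p k - |p k₀| * sign (p k)
  have hsum' : 0 < ∑ k, p' k := by
    have hdecomp : ∑ k, p' k = ∑ k, p k - |p k₀| * ∑ k, (sign (p k) : α) := by
      simp only [p', sum_sub_distrib, mul_sum]
    have : 0 < |p k₀| * -∑ k, (sign (p k) : α) :=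
      mul_pos (abs_pos.2 hk₀) (neg_pos.2 (not_le.1 hsign))
    linarith
  have hp'0 : p' ≠ 0 := fun h ↦ hsum'.ne' (by simp [h])
  have hlt : (Function.support p').ncard < (Function.support p).ncard :=
    Set.ncard_lt_ncard (support_sub_abs_mul_sign_ssubset hk₀) (Set.toFinite _)
  exact exists_mem_edgeCone_sum_sign_nonneg
    (sub_mul_sign_mem_edgeCone (abs_nonneg _) hmin hp) hp'0 hsum'.le
termination_by (Function.support p).ncard

theorem exists_pm_one_weight_general (n : ℕ) (A : Finset (Sym2 (Fin n)))
    (p : Fin n → ℝ) (hp : p ≠ 0)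
    (hpP : ∀ i j : Fin n, s(i, j) ∈ A → p i + p j ≤ 0)
    (hpσ : 0 ≤ ∑ k, p k) :
    ∃ q : Fin n → ℝ, q ≠ 0 ∧
      (∀ i j : Fin n, s(i, j) ∈ A → q i + q j ≤ 0) ∧
      0 ≤ ∑ k, q k ∧
      ∀ k, q k = -1 ∨ q k = 0 ∨ q k = 1 := by
  obtain ⟨q, hqP, hq0, hqσ⟩ :=
    exists_mem_edgeCone_sum_sign_nonneg (A := (A : Set (Sym2 (Fin n)))) hpP hp hpσ
  obtain ⟨k₀, hk₀⟩ := Function.ne_iff.1 hq0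
  refine ⟨fun k ↦ (sign (q k) : ℝ), fun h ↦ ?_, sign_comp_mem_edgeCone hqP, hqσ, fun k ↦ ?_⟩
  · exact hk₀ (by rw [← abs_mul_sign (q k₀), congrFun h k₀, Pi.zero_apply, mul_zero])
  · rcases (sign (q k)).trichotomy with hs | hs | hs <;> simp [hs]

/-- If the polyhedral cone `P = {p : pᵢ + pⱼ ≤ 0 for {i,j} ∈ A}` contains a nonzero
vector with nonnegative coordinate sum, then it contains one with all
coordinates in `{-1, 0, 1}`. -/
theorem exists_pm_one_weight (n : ℕ) (A : Finset (Sym2 (Fin n)))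
    (hA : ∀ e ∈ A, ¬ e.IsDiag)
    (p : Fin n → ℝ) (hp : p ≠ 0)
    (hpP : ∀ i j : Fin n, s(i, j) ∈ A → p i + p j ≤ 0)
    (hpσ : 0 ≤ ∑ k, p k) :
    ∃ q : Fin n → ℝ, q ≠ 0 ∧
      (∀ i j : Fin n, s(i, j) ∈ A → q i + q j ≤ 0) ∧
      0 ≤ ∑ k, q k ∧
      ∀ k, q k = -1 ∨ q k = 0 ∨ q k = 1 :=
  exists_pm_one_weight_general n A p hp hpP hpσ
end

section
/- Let G be a finite simple graph with vertex set V = {1,…,n}, edge set A, and let P = {p ∈ ℝ^n : p_i + p_j ≤ 0 for all {i,j} ∈ A}, σ(p) = Σ p_k. There exists a nonzero p ∈ P with σ(p) ≥ 0 if and only if there exists a nonempty independent (stable) set I ⊆ V with |I| ≥ |∂I|, where ∂I is the set of vertices not in I that are adjacent to some vertex of I. -/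
open Finset

private lemma cone_key (n : ℕ) (G : SimpleGraph (Fin n)) :
    ∀ k : ℕ, ∀ p : Fin n → ℝ,
      (Finset.univ.image fun i => |p i|).card ≤ k →
      p ≠ 0 → (∀ i j : Fin n, G.Adj i j → p i + p j ≤ 0) → 0 ≤ ∑ k, p k →
      ∃ I : Set (Fin n), I.Nonempty ∧
        (∀ i ∈ I, ∀ j ∈ I, ¬ G.Adj i j) ∧
        {v : Fin n | v ∉ I ∧ ∃ i ∈ I, G.Adj v i}.ncard ≤ I.ncard := by
  intro k
  induction k with
  | zero =>
    intro p hcard hp0 _ _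
    exfalso
    obtain ⟨i, hi⟩ := Function.ne_iff.1 hp0
    have : |p i| ∈ Finset.univ.image fun i => |p i| := Finset.mem_image_of_mem _ (mem_univ i)
    have := Finset.card_pos.2 ⟨_, this⟩
    omega
  | succ k ih =>
    intro p hcard hp0 hedge hsum
    classical
    obtain ⟨i₀, hi₀⟩ := Function.ne_iff.1 hp0
    have hne : (Finset.univ : Finset (Fin n)).Nonempty := ⟨i₀, mem_univ i₀⟩
    set M : ℝ := Finset.univ.sup' hne p with hMdef
    have hMle : ∀ i, p i ≤ M := fun i => Finset.le_sup' p (mem_univ i)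
    obtain ⟨im, _, him⟩ := Finset.exists_mem_eq_sup' hne p
    have hM : 0 < M := by
      by_contra h
      push_neg at h
      have hle : ∀ i ∈ Finset.univ, p i ≤ 0 := fun i _ => (hMle i).trans h
      have hz : ∑ i, p i = 0 := le_antisymm (Finset.sum_nonpos hle) hsum
      have := (Finset.sum_eq_zero_iff_of_nonpos hle).1 hz i₀ (mem_univ i₀)
      exact hi₀ this
    by_cases hcase :
        (Finset.univ.filter fun i => p i ≤ -M).card ≤
          (Finset.univ.filter fun i => M ≤ p i).card
    · -- the top level set works
      refine ⟨↑(Finset.univ.filter fun i => M ≤ p i), ⟨im, ?_⟩, ?_, ?_⟩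
      · simp only [Finset.coe_filter, Set.mem_setOf_eq]
        exact ⟨mem_univ im, him.le⟩
      · intro i hi j hj hadj
        simp only [Finset.coe_filter, Set.mem_setOf_eq] at hi hj
        have := hedge i j hadj
        linarith [hi.2, hj.2]
      · have hsub : {v : Fin n | v ∉ (↑(Finset.univ.filter fun i => M ≤ p i) : Set (Fin n)) ∧
            ∃ i ∈ (↑(Finset.univ.filter fun i => M ≤ p i) : Set (Fin n)), G.Adj v i} ⊆
            ↑(Finset.univ.filter fun i => p i ≤ -M) := by
          rintro v ⟨-, i, hi, hadj⟩
          simp only [Finset.coe_filter, Set.mem_setOf_eq] at hi ⊢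
          have := hedge v i hadj
          exact ⟨mem_univ v, by linarith [hi.2]⟩
        calc {v : Fin n | v ∉ (↑(Finset.univ.filter fun i => M ≤ p i) : Set (Fin n)) ∧
                ∃ i ∈ (↑(Finset.univ.filter fun i => M ≤ p i) : Set (Fin n)), G.Adj v i}.ncard
            ≤ (↑(Finset.univ.filter fun i => p i ≤ -M) : Set (Fin n)).ncard :=
              Set.ncard_le_ncard hsub (Set.toFinite _)
          _ = (Finset.univ.filter fun i => p i ≤ -M).card := Set.ncard_coe_finset _
          _ ≤ (Finset.univ.filter fun i => M ≤ p i).card := hcase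
          _ = (↑(Finset.univ.filter fun i => M ≤ p i) : Set (Fin n)).ncard :=
              (Set.ncard_coe_finset _).symm
    · -- clamp and recurse
      push_neg at hcase
      set A : Finset ℝ := Finset.univ.image fun i => |p i| with hAdef
      set c : ℝ := (insert (0:ℝ) (A.filter (· < M))).max' (insert_nonempty _ _) with hcdef
      have hmemA : ∀ j : Fin n, |p j| ∈ A := fun j => by
        rw [hAdef]; exact Finset.mem_image_of_mem _ (mem_univ j)
      have hc0 : 0 ≤ c := by
        rw [hcdef]
        exact Finset.le_max' _ 0 (mem_insert_self _ _)
      have hcmem : c ∈ insert (0:ℝ) (A.filter (· < M)) := by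
        rw [hcdef]
        exact Finset.max'_mem _ _
      have hcM : c < M := by
        rw [Finset.mem_insert] at hcmem
        rcases hcmem with h | h
        · rw [h]; exact hM
        · exact (Finset.mem_filter.1 h).2
      have hcb : ∀ i, |p i| < M → |p i| ≤ c := by
        intro i hi
        have hmemf : |p i| ∈ A.filter (· < M) := by
          refine Finset.mem_filter.2 ⟨hmemA i, ?_⟩
          exact hi
        have hmem : |p i| ∈ insert (0:ℝ) (A.filter (· < M)) :=
          Finset.mem_insert_of_mem hmemf
        rw [hcdef]
        exact Finset.le_max' _ _ hmem
      set p' : Fin n → ℝ := fun i => max (-c) (min c (p i)) with hp'def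
      have habs : ∀ i, |p' i| = min c |p i| := by
        intro i
        have hev : p' i = max (-c) (min c (p i)) := rfl
        rcases le_total c (p i) with h | h
        · have h1 : p' i = c := by
            rw [hev, min_eq_left h, max_eq_right (by linarith : -c ≤ c)]
          rw [h1, abs_of_nonneg hc0, abs_of_nonneg (hc0.trans h), min_eq_left h]
        · rcases le_total (p i) (-c) with h2 | h2
          · have h1 : p' i = -c := by
              rw [hev, min_eq_right (by linarith : p i ≤ c), max_eq_left h2]
            rw [h1, abs_of_nonpos (by linarith : -c ≤ 0), neg_neg,
              abs_of_nonpos (by linarith : p i ≤ 0), min_eq_left (by linarith)]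
          · have h1 : p' i = p i := by
              rw [hev, min_eq_right h, max_eq_right h2]
            rw [h1, min_eq_right (abs_le.2 ⟨h2, h⟩)]
      have hedge' : ∀ i j : Fin n, G.Adj i j → p' i + p' j ≤ 0 := by
        intro i j hadj
        have := hedge i j hadj
        rw [hp'def]
        simp only [max_def, min_def]
        split_ifs <;> linarith
      -- pointwise bound on the change of sum
      have hpt : ∀ i, (if M ≤ p i then c - M else if p i ≤ -M then M - c else (0:ℝ))
          ≤ p' i - p i := by
        intro i
        have hev : p' i = max (-c) (min c (p i)) := rfl
        split_ifs with h1 h2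
        · have hpi : p i = M := le_antisymm (hMle i) h1
          have h5 : p' i = c := by
            rw [hev, hpi, min_eq_left hcM.le, max_eq_right (by linarith : -c ≤ c)]
          rw [h5, hpi]
        · have h5 : p' i = -c := by
            rw [hev, min_eq_right (by linarith : p i ≤ c),
              max_eq_left (by linarith : p i ≤ -c)]
          rw [h5]; linarith
        · push_neg at h1 h2
          have habslt : |p i| < M := abs_lt.2 ⟨by linarith, h1⟩
          have hle := hcb i habslt
          have h3 : -c ≤ p i := by
            have := neg_abs_le (p i); linarith
          have h4 : p i ≤ c := (le_abs_self _).trans hle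
          have h5 : p' i = p i := by
            rw [hev, min_eq_right h4, max_eq_right h3]
          rw [h5]; linarith
      have hsumf : (((Finset.univ.filter fun i => p i ≤ -M).card : ℝ) -
            (Finset.univ.filter fun i => M ≤ p i).card) * (M - c) ≤ ∑ i, (p' i - p i) := by
        have h1 : ∑ i, (if M ≤ p i then c - M else if p i ≤ -M then M - c else (0:ℝ))
            ≤ ∑ i, (p' i - p i) := Finset.sum_le_sum fun i _ => hpt i
        have h2 : ∑ i, (if M ≤ p i then c - M else if p i ≤ -M then M - c else (0:ℝ))
            = ((Finset.univ.filter fun i => M ≤ p i).card : ℝ) * (c - M) +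
              ((Finset.univ.filter fun i => p i ≤ -M).card : ℝ) * (M - c) := by
          rw [Finset.sum_ite]
          rw [Finset.sum_const, Finset.sum_ite, Finset.sum_const, Finset.sum_const]
          have hff : ((Finset.univ.filter fun i => ¬ M ≤ p i).filter fun i => p i ≤ -M)
              = Finset.univ.filter fun i => p i ≤ -M := by
            rw [Finset.filter_filter]
            apply Finset.filter_congr
            intro i _
            constructor
            · exact fun h => h.2
            · intro h; exact ⟨by push_neg; linarith, h⟩
          rw [hff]
          simp only [Finset.sum_const, nsmul_eq_mul, mul_one]
          ring
        rw [h2] at h1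
        calc (((Finset.univ.filter fun i => p i ≤ -M).card : ℝ) -
              (Finset.univ.filter fun i => M ≤ p i).card) * (M - c)
            = ((Finset.univ.filter fun i => M ≤ p i).card : ℝ) * (c - M) +
              ((Finset.univ.filter fun i => p i ≤ -M).card : ℝ) * (M - c) := by ring
          _ ≤ ∑ i, (p' i - p i) := h1
      have hcard_gap : ((Finset.univ.filter fun i => M ≤ p i).card : ℝ) + 1 ≤
          ((Finset.univ.filter fun i => p i ≤ -M).card : ℝ) := by
        exact_mod_cast hcase
      have hsum' : 0 < ∑ i, p' i := by
        have hsplit : ∑ i, (p' i - p i) = (∑ i, p' i) - ∑ i, p i := by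
          rw [Finset.sum_sub_distrib]
        have hMc : 0 < M - c := by linarith
        have h1 : (M - c) ≤ (((Finset.univ.filter fun i => p i ≤ -M).card : ℝ) -
            (Finset.univ.filter fun i => M ≤ p i).card) * (M - c) := by
          nlinarith [hcard_gap, hMc]
        linarith [hsumf, hsum]
      have hp'0 : p' ≠ 0 := by
        intro h
        rw [h] at hsum'
        simp at hsum'
      have hcA : c ∈ A := by
        rw [Finset.mem_insert] at hcmem
        rcases hcmem with h | h
        · exfalso
          apply hp'0
          funext i
          have h1 := habs i
          rw [h] at h1
          have h2 : |p' i| = 0 := by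
            rw [h1, min_eq_left (abs_nonneg _)]
          simpa using h2
        · exact (Finset.mem_filter.1 h).1
      have hMA : M ∈ A := by
        have : |p im| = M := by rw [← him, abs_of_pos hM]
        exact this ▸ hmemA im
      have himg : (Finset.univ.image fun i => |p' i|) ⊆ A.erase M := by
        intro x hx
        obtain ⟨i, -, hix⟩ := Finset.mem_image.1 hx
        rw [habs i] at hix
        rcases le_total (|p i|) c with h | h
        · rw [min_eq_right h] at hix
          refine Finset.mem_erase.2 ⟨?_, hix ▸ hmemA i⟩
          rw [← hix]
          intro hcontra
          rw [hcontra] at h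
          linarith
        · rw [min_eq_left h] at hix
          exact Finset.mem_erase.2 ⟨hix ▸ hcM.ne, hix ▸ hcA⟩
      have hcard' : (Finset.univ.image fun i => |p' i|).card ≤ k := by
        have h1 := Finset.card_le_card himg
        have h2 := Finset.card_erase_of_mem hMA
        omega
      exact ih p' hcard' hp'0 hedge' hsum'.le

/-- The cone criterion in graph terms: there is a nonzero `p` with `pᵢ + pⱼ ≤ 0`
on every edge and `Σ pₖ ≥ 0` iff the graph has a nonempty independent set `I`
with `|I| ≥ |∂I|`, where `∂I` is the set of vertices outside `I` adjacent to `I`. -/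
theorem cone_criterion_iff_independent_set (n : ℕ) (G : SimpleGraph (Fin n)) :
    (∃ p : Fin n → ℝ, p ≠ 0 ∧
        (∀ i j : Fin n, G.Adj i j → p i + p j ≤ 0) ∧ 0 ≤ ∑ k, p k) ↔
      (∃ I : Set (Fin n), I.Nonempty ∧
        (∀ i ∈ I, ∀ j ∈ I, ¬ G.Adj i j) ∧
        {v : Fin n | v ∉ I ∧ ∃ i ∈ I, G.Adj v i}.ncard ≤ I.ncard) := by
  classical
  constructor
  · rintro ⟨p, hp0, hedge, hsum⟩
    exact cone_key n G _ p le_rfl hp0 hedge hsum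
  · rintro ⟨I, ⟨i₀, hi₀⟩, hind, hcard⟩
    set B : Set (Fin n) := {v : Fin n | v ∉ I ∧ ∃ i ∈ I, G.Adj v i} with hBdef
    refine ⟨fun v => if v ∈ I then 1 else if v ∈ B then -1 else 0, ?_, ?_, ?_⟩
    · refine Function.ne_iff.2 ⟨i₀, ?_⟩
      simp [hi₀]
    · intro i j hadj
      by_cases hi : i ∈ I <;> by_cases hj : j ∈ I
      · exact absurd hadj (hind i hi j hj)
      · have hjB : j ∈ B := ⟨hj, i, hi, hadj.symm⟩
        simp [hi, hj, hjB]
      · have hiB : i ∈ B := ⟨hi, j, hj, hadj⟩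
        simp [hi, hj, hiB]
      · simp only [if_neg hi, if_neg hj]
        split_ifs <;> norm_num
    · have hsum : ∑ v, (if v ∈ I then (1:ℝ) else if v ∈ B then -1 else 0)
          = ((Finset.univ.filter fun v => v ∈ I).card : ℝ) -
            ((Finset.univ.filter fun v => v ∈ B).card : ℝ) := by
        rw [Finset.sum_ite, Finset.sum_const, Finset.sum_ite, Finset.sum_const,
          Finset.sum_const]
        have hff : ((Finset.univ.filter fun v => ¬ v ∈ I).filter fun v => v ∈ B)
            = Finset.univ.filter fun v => v ∈ B := by
          rw [Finset.filter_filter]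
          apply Finset.filter_congr
          intro v _
          constructor
          · exact fun h => h.2
          · intro h; exact ⟨h.1, h⟩
        rw [hff]
        simp only [Finset.sum_const, nsmul_eq_mul, mul_one, mul_neg]
        ring
      rw [hsum]
      have hI : I.ncard = (Finset.univ.filter fun v => v ∈ I).card := by
        rw [Set.ncard_eq_toFinset_card' I]
        congr 1
        ext v
        simp
      have hB : B.ncard = (Finset.univ.filter fun v => v ∈ B).card := by
        rw [Set.ncard_eq_toFinset_card' B]
        congr 1
        ext v
        simp [hBdef]
      rw [hI, hB] at hcard
      have : ((Finset.univ.filter fun v => v ∈ B).card : ℝ) ≤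
          ((Finset.univ.filter fun v => v ∈ I).card : ℝ) := by exact_mod_cast hcard
      linarith
end

section
/- Let b be a nondegenerate symmetric bilinear form of signature (p, q+1) on ℝ^{p+q+1}, n = p+q+1, and let x_1,…,x_n be a basis of ℝ^{p+q+1} with b(x_i, x_j) ≤ 0 for all i, j. Define f : ℝ^n → ℝ by f(t) = -b(Σ t_k x_k, Σ t_k x_k) = Σ_{i,j} (-b(x_i,x_j)) t_i t_j. Then f(t) > 0 for all t in the open positive orthant ℝ^n_{>0}. -/
/-!
Expanding, `b(v, v) = Σᵢⱼ tᵢ tⱼ b(xᵢ, xⱼ)` is a sum of nonpositive terms. It vanishes only if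
`b(xᵢ, xⱼ) = 0` for all `i, j`, i.e. only if `b = 0`; but `Q` has a negative eigenvalue.
-/

namespace LinearMap.BilinForm

theorem apply_sum_smul_sum_smul {R M ι : Type*} [CommSemiring R] [AddCommMonoid M] [Module R M]
    [Fintype ι] (B : LinearMap.BilinForm R M) (x : ι → M) (t : ι → R) :
    B (∑ i, t i • x i) (∑ j, t j • x j) = ∑ i, ∑ j, t i * t j * B (x i) (x j) := by
  simp only [map_sum, map_smul, LinearMap.sum_apply, LinearMap.smul_apply, smul_eq_mul,
    Finset.mul_sum]
  rw [Finset.sum_comm]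
  exact Finset.sum_congr rfl fun i _ => Finset.sum_congr rfl fun j _ => by ring

theorem apply_sum_smul_self_neg_of_basis_nonpos {R M ι : Type*} [CommRing R] [LinearOrder R]
    [IsStrictOrderedRing R] [AddCommGroup M] [Module R M] [Fintype ι]
    {B : LinearMap.BilinForm R M} (hB : B ≠ 0) (x : Module.Basis ι R M)
    (hx : ∀ i j, B (x i) (x j) ≤ 0) {t : ι → R} (ht : ∀ i, 0 < t i) :
    B (∑ i, t i • x i) (∑ i, t i • x i) < 0 := by
  obtain ⟨i₀, j₀, hne⟩ : ∃ i j, B (x i) (x j) ≠ 0 := by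
    by_contra! h
    exact hB (ext_basis x fun i j => h i j)
  have hterm (i j : ι) : t i * t j * B (x i) (x j) ≤ 0 :=
    mul_nonpos_of_nonneg_of_nonpos (mul_pos (ht i) (ht j)).le (hx i j)
  have hterm₀ : t i₀ * t j₀ * B (x i₀) (x j₀) < 0 :=
    mul_neg_of_pos_of_neg (mul_pos (ht i₀) (ht j₀)) ((hx i₀ j₀).lt_of_ne hne)
  rw [apply_sum_smul_sum_smul]
  exact Finset.sum_neg' (fun i _ => Finset.sum_nonpos fun j _ => hterm i j)
    ⟨i₀, Finset.mem_univ _, Finset.sum_neg' (fun j _ => hterm i₀ j) ⟨j₀, Finset.mem_univ _, hterm₀⟩⟩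

end LinearMap.BilinForm

theorem quadratic_pos_on_orthant_general (p q : ℕ)
    (Q : Matrix (Fin (p + q + 1)) (Fin (p + q + 1)) ℝ) (hQ : Q.IsHermitian)
    (hsig_neg : Fintype.card {i // hQ.eigenvalues i < 0} = q + 1)
    (x : Module.Basis (Fin (p + q + 1)) ℝ (Fin (p + q + 1) → ℝ))
    (hgram : ∀ i j, dotProduct (x i) (Q.mulVec (x j)) ≤ 0) :
    ∀ t : Fin (p + q + 1) → ℝ, (∀ i, 0 < t i) →
      0 < - dotProduct (∑ k, t k • x k) (Q.mulVec (∑ k, t k • x k)) := by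
  intro t ht
  obtain ⟨⟨i, hi⟩⟩ : Nonempty {i // hQ.eigenvalues i < 0} :=
    Fintype.card_pos_iff.mp (by omega)
  have hQ0 : Matrix.toBilin' Q ≠ 0 := Matrix.toBilin'.map_ne_zero_iff.mpr
    fun h => hi.ne (congrFun (hQ.eigenvalues_eq_zero_iff.mpr h) i)
  have hneg := LinearMap.BilinForm.apply_sum_smul_self_neg_of_basis_nonpos hQ0 x
    (fun i j => by simpa only [Matrix.toBilin'_apply'] using hgram i j) ht
  rw [Matrix.toBilin'_apply'] at hneg
  exact neg_pos.mpr hneg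

/-- Let `b` be the nondegenerate symmetric bilinear form of signature `(p, q+1)`
given by a symmetric matrix `Q` on `ℝ^{p+q+1}`, and let `x₁,…,xₙ` (`n = p+q+1`) be
a basis with `b(xᵢ, xⱼ) ≤ 0` for all `i, j`.  Then
`f(t) = -b(Σ tₖ xₖ, Σ tₖ xₖ)` is positive on the open positive orthant. -/
theorem quadratic_pos_on_orthant (p q : ℕ)
    (Q : Matrix (Fin (p + q + 1)) (Fin (p + q + 1)) ℝ) (hQ : Q.IsHermitian)
    (hsig_pos : Fintype.card {i // 0 < hQ.eigenvalues i} = p)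
    (hsig_neg : Fintype.card {i // hQ.eigenvalues i < 0} = q + 1)
    (x : Module.Basis (Fin (p + q + 1)) ℝ (Fin (p + q + 1) → ℝ))
    (hgram : ∀ i j, dotProduct (x i) (Q.mulVec (x j)) ≤ 0) :
    ∀ t : Fin (p + q + 1) → ℝ, (∀ i, 0 < t i) →
      0 < - dotProduct (∑ k, t k • x k) (Q.mulVec (∑ k, t k • x k)) :=
  quadratic_pos_on_orthant_general p q Q hQ hsig_neg x hgram
end
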